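/- Let L be an integral ℓ-monoid and let R be a fuzzy relation on a finite set A with |A| = n. Then the fuzzy relation ⋁_{k=1}^{n} R^k (the pointwise join of the first n powers of R) is the least transitive fuzzy relation on A containing R. -/
import Mathlib


attribute [local instance] Classical.propDecidable

/-- A lattice-ordered monoid (ℓ-monoid). -/
class LMonoid (L : Type*) extends Lattice L, BoundedOrder L, Monoid L where
  mul_bot : ∀ x : L, x * ⊥ = ⊥
  bot_mul : ∀ x : L, ⊥ * x = ⊥
  mul_sup : ∀ x y z : L, x * (y ⊔ z) = x * y ⊔ x * z
  sup_mul : ∀ x y z : L, (x ⊔ y) * z = x * z ⊔ y * z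

/-- An integral ℓ-monoid: the unit of the multiplication is the top element of the lattice. -/
class IntegralLMonoid (L : Type*) extends LMonoid L where
  one_eq_top : (1 : L) = ⊤

noncomputable section

/-- Composition of fuzzy relations: `(R ∘ S)(a,b) = ⋁_{c} R(a,c) ⊗ S(c,b)`. -/
def fcomp {L A : Type*} [IntegralLMonoid L] [Fintype A] (R S : A → A → L) : A → A → L :=
  fun a b => Finset.univ.sup fun c => R a c * S c b

/-- Powers of a fuzzy relation: `R⁰` is the crisp equality and `R^{k+1} = R^k ∘ R`. -/
def rpow {L A : Type*} [IntegralLMonoid L] [Fintype A] (R : A → A → L) : ℕ → A → A → L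
  | 0 => fun a b => if a = b then 1 else ⊥
  | k + 1 => fcomp (rpow R k) R

/-- The pointwise join `⋁_{k=1}^{n} R^k` of the first `n = |A|` powers of a fuzzy
relation `R`. -/
def powJoin {L A : Type*} [IntegralLMonoid L] [Fintype A] (R : A → A → L) : A → A → L :=
  fun a b => (Finset.Icc 1 (Fintype.card A)).sup fun k => rpow R k a b

section Aux

variable {L A : Type*} [IntegralLMonoid L] [Fintype A]

lemma lle_one (x : L) : x ≤ 1 := by
  rw [IntegralLMonoid.one_eq_top]; exact le_top

lemma lmul_mono_left (z : L) {x y : L} (h : x ≤ y) : z * x ≤ z * y := by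
  calc z * x ≤ z * x ⊔ z * y := le_sup_left
    _ = z * (x ⊔ y) := (LMonoid.mul_sup z x y).symm
    _ = z * y := by rw [sup_eq_right.mpr h]

lemma lmul_mono_right (z : L) {x y : L} (h : x ≤ y) : x * z ≤ y * z := by
  calc x * z ≤ x * z ⊔ y * z := le_sup_left
    _ = (x ⊔ y) * z := (LMonoid.sup_mul x y z).symm
    _ = y * z := by rw [sup_eq_right.mpr h]

lemma lmul_mono {x y x' y' : L} (hx : x ≤ x') (hy : y ≤ y') : x * y ≤ x' * y' :=
  le_trans (lmul_mono_left x hy) (lmul_mono_right y' hx)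

lemma lmul_le_left (x y : L) : x * y ≤ x := by
  have := lmul_mono_left x (lle_one y)
  rwa [mul_one] at this

lemma lmul_le_right (x y : L) : x * y ≤ y := by
  have := lmul_mono_right y (lle_one x)
  rwa [one_mul] at this

lemma lmul_finsup {β : Type*} (s : Finset β) (x : L) (f : β → L) :
    x * s.sup f = s.sup fun i => x * f i :=
  Finset.comp_sup_eq_sup_comp (x * ·) (fun a b => LMonoid.mul_sup x a b) (LMonoid.mul_bot x)

lemma lfinsup_mul {β : Type*} (s : Finset β) (x : L) (f : β → L) :
    s.sup f * x = s.sup fun i => f i * x :=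
  Finset.comp_sup_eq_sup_comp (· * x) (fun a b => LMonoid.sup_mul a b x) (LMonoid.bot_mul x)

/-- Value of a path: product of `R` along consecutive vertices. -/
def pv (R : A → A → L) : List A → L
  | [] => 1
  | [_] => 1
  | x :: y :: t => R x y * pv R (y :: t)

lemma pv_split (R : A → A → L) :
    ∀ (u : List A) (x : A) (v : List A),
      pv R (u ++ x :: v) = pv R (u ++ [x]) * pv R (x :: v) := by
  intro u
  induction u with
  | nil => intro x v; simp [pv]
  | cons a u ih =>
    intro x v
    cases u with
    | nil => simp [pv, mul_one]
    | cons b t =>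
      have h1 : pv R ((a :: b :: t) ++ x :: v) = R a b * pv R ((b :: t) ++ x :: v) := by
        simp [pv]
      have h2 : pv R ((a :: b :: t) ++ [x]) = R a b * pv R ((b :: t) ++ [x]) := by
        simp [pv]
      rw [h1, ih x v, h2, mul_assoc]

lemma pv_cut (R : A → A → L) (p : List A) (x : A) (q r : List A) :
    pv R (p ++ x :: (q ++ x :: r)) ≤ pv R (p ++ x :: r) := by
  rw [pv_split R p x (q ++ x :: r), pv_split R p x r]
  refine lmul_mono_left _ ?_
  have h : x :: (q ++ x :: r) = (x :: q) ++ x :: r := by simp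
  rw [h, pv_split R (x :: q) x r]
  exact lmul_le_right _ _

lemma ofFn_snoc {m : ℕ} (f : Fin m → A) (c : A) :
    List.ofFn (Fin.snoc f c) = List.ofFn f ++ [c] := by
  rw [List.ofFn_succ']
  simp [List.concat_eq_append]

lemma rpow_eq_sup_pv (R : A → A → L) :
    ∀ (m : ℕ) (a b : A), rpow R (m + 1) a b =
      (Finset.univ : Finset (Fin m → A)).sup fun f => pv R (a :: (List.ofFn f ++ [b])) := by
  intro m
  induction m with
  | zero =>
    intro a b
    apply le_antisymm
    · refine Finset.sup_le fun c _ => ?_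
      by_cases h : a = c
      · subst h
        simp only [rpow, if_pos rfl, one_mul]
        refine le_trans ?_ (Finset.le_sup (Finset.mem_univ (Fin.elim0 : Fin 0 → A)))
        simp [pv, mul_one]
      · simp only [rpow, if_neg h, LMonoid.bot_mul]
        exact bot_le
    · refine Finset.sup_le fun f _ => ?_
      have hf : (List.ofFn f : List A) = [] := by simp
      rw [hf]
      simp only [List.nil_append]
      have hpv : pv R [a, b] = R a b := by simp [pv, mul_one]
      rw [hpv]
      refine le_trans ?_ (Finset.le_sup (f := fun c => rpow R 0 a c * R c b)
        (Finset.mem_univ a))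
      simp [rpow]
    | succ m ih =>
      intro a b
      have key : ∀ (c : A) (f : Fin m → A),
          pv R (a :: (List.ofFn f ++ [c])) * R c b
            = pv R (a :: (List.ofFn (Fin.snoc f c) ++ [b])) := by
        intro c f
        rw [ofFn_snoc]
        have h1 : (a :: ((List.ofFn f ++ [c]) ++ [b]) : List A)
            = (a :: List.ofFn f) ++ c :: [b] := by simp
        rw [h1, pv_split R (a :: List.ofFn f) c [b]]
        have h2 : (a :: (List.ofFn f ++ [c]) : List A) = (a :: List.ofFn f) ++ [c] := by simp
        rw [h2]
        have h3 : pv R [c, b] = R c b := by simp [pv, mul_one]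
        rw [h3]
      show Finset.univ.sup (fun c => rpow R (m + 1) a c * R c b) = _
      apply le_antisymm
      · refine Finset.sup_le fun c _ => ?_
        rw [ih a c, lfinsup_mul]
        refine Finset.sup_le fun f _ => ?_
        rw [key c f]
        exact Finset.le_sup (f := fun g : Fin (m+1) → A => pv R (a :: (List.ofFn g ++ [b])))
          (Finset.mem_univ ((Fin.snoc f c : Fin (m+1) → A)))
      · refine Finset.sup_le fun g _ => ?_
        have hg : g = Fin.snoc (Fin.init g) (g (Fin.last m)) := (Fin.snoc_init_self g).symm
        set c := g (Fin.last m)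
        set f := Fin.init g
        have hterm : pv R (a :: (List.ofFn g ++ [b]))
            = pv R (a :: (List.ofFn f ++ [c])) * R c b := by
          rw [key c f, ← hg]
        rw [hterm]
        have hpc : pv R (a :: (List.ofFn f ++ [c])) ≤ rpow R (m + 1) a c := by
          rw [ih a c]
          exact Finset.le_sup (f := fun h : Fin m → A => pv R (a :: (List.ofFn h ++ [c])))
            (Finset.mem_univ (f : Fin m → A))
        exact le_trans (lmul_mono_right _ hpc)
          (Finset.le_sup (f := fun c => rpow R (m + 1) a c * R c b) (Finset.mem_univ c))

lemma pv_le_rpow (R : A → A → L) (l : List A) (a b : A) :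
    pv R (a :: (l ++ [b])) ≤ rpow R (l.length + 1) a b := by
  rw [rpow_eq_sup_pv]
  have h : List.ofFn l.get = l := List.ofFn_get l
  refine le_trans (le_of_eq ?_) (Finset.le_sup (Finset.mem_univ l.get))
  rw [h]

lemma dup_decomp : ∀ (l : List A), ¬ l.Nodup →
    ∃ (p : List A) (x : A) (q r : List A), l = p ++ x :: (q ++ x :: r) := by
  intro l
  induction l with
  | nil => intro h; exact absurd List.nodup_nil h
  | cons a t ih =>
    intro h
    by_cases ha : a ∈ t
    · obtain ⟨q, r, hqr⟩ := List.append_of_mem ha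
      exact ⟨[], a, q, r, by simp [hqr]⟩
    · have ht : ¬ t.Nodup := by
        intro hnd
        exact h (List.nodup_cons.mpr ⟨ha, hnd⟩)
      obtain ⟨p, x, q, r, hdec⟩ := ih ht
      exact ⟨a :: p, x, q, r, by simp [hdec]⟩

lemma rpow_shrink (R : A → A → L) (m : ℕ) (hm : Fintype.card A ≤ m) (a b : A) :
    rpow R (m + 1) a b ≤ (Finset.Icc 1 m).sup fun k => rpow R k a b := by
  rw [rpow_eq_sup_pv]
  refine Finset.sup_le fun f _ => ?_
  have hnd : ¬ (a :: List.ofFn f).Nodup := by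
    intro h
    have := h.length_le_card
    simp only [List.length_cons, List.length_ofFn] at this
    omega
  obtain ⟨p, x, q, r', hdec⟩ := dup_decomp _ hnd
  have hw : (a :: (List.ofFn f ++ [b]) : List A) = p ++ x :: (q ++ x :: (r' ++ [b])) := by
    have : (a :: (List.ofFn f ++ [b]) : List A) = (a :: List.ofFn f) ++ [b] := by simp
    rw [this, hdec]; simp
  have hcut : pv R (a :: (List.ofFn f ++ [b])) ≤ pv R (p ++ x :: (r' ++ [b])) := by
    rw [hw]; exact pv_cut R p x q (r' ++ [b])
  have hlen : p.length + 1 + q.length + 1 + r'.length = m + 1 := by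
    have := congrArg List.length hdec
    simp at this
    omega
  cases p with
  | nil =>
    have hx : x = a := by
      have := congrArg (fun l => l.head?) hdec
      simpa using this.symm
    subst hx
    have hle : pv R (x :: (r' ++ [b])) ≤ rpow R (r'.length + 1) x b := pv_le_rpow R r' x b
    refine le_trans hcut (le_trans (by simpa using hle) (Finset.le_sup ?_))
    simp only [Finset.mem_Icc]
    omega
  | cons a' p' =>
    have hx : a' = a := by
      have := congrArg (fun l => l.head?) hdec
      simpa using this.symm
    subst hx
    have heq : ((a' :: p') ++ x :: (r' ++ [b]) : List A) = a' :: ((p' ++ x :: r') ++ [b]) := by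
      simp
    have hle : pv R (a' :: ((p' ++ x :: r') ++ [b])) ≤ rpow R ((p' ++ x :: r').length + 1) a' b :=
      pv_le_rpow R (p' ++ x :: r') a' b
    refine le_trans hcut (le_trans (by rw [heq]; exact hle) (Finset.le_sup ?_))
    simp only [Finset.mem_Icc, List.length_append, List.length_cons]
    simp only [List.length_cons] at hlen
    omega

lemma rpow_le_powJoin (R : A → A → L) :
    ∀ (m : ℕ), 1 ≤ m → ∀ a b, rpow R m a b ≤ powJoin R a b := by
  intro m
  induction m using Nat.strong_induction_on with
  | _ m ih =>
    intro hm a b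
    by_cases hcard : m ≤ Fintype.card A
    · exact Finset.le_sup (f := fun k => rpow R k a b) (Finset.mem_Icc.mpr ⟨hm, hcard⟩)
    · obtain ⟨m', rfl⟩ : ∃ k, m = k + 1 := ⟨m - 1, by omega⟩
      have h1 : Fintype.card A ≤ m' := by omega
      refine le_trans (rpow_shrink R m' h1 a b) (Finset.sup_le fun k hk => ?_)
      rw [Finset.mem_Icc] at hk
      exact ih k (by omega) hk.1 a b

lemma rpow_one_eq (R : A → A → L) (a b : A) : rpow R 1 a b = R a b := by
  apply le_antisymm
  · refine Finset.sup_le fun c _ => ?_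
    by_cases h : a = c
    · subst h; simp [rpow]
    · simp [rpow, if_neg h, LMonoid.bot_mul]
  · refine le_trans ?_ (Finset.le_sup (f := fun c => rpow R 0 a c * R c b)
      (Finset.mem_univ a))
    simp [rpow]

lemma rpow_mul_le (R : A → A → L) (j : ℕ) :
    ∀ (k : ℕ) (a b c : A), rpow R j a b * rpow R k b c ≤ rpow R (j + k) a c := by
  intro k
  induction k with
  | zero =>
    intro a b c
    by_cases h : b = c
    · subst h
      have h0 : rpow R 0 b b = 1 := by simp [rpow]
      rw [h0, mul_one, Nat.add_zero]
    · have h0 : rpow R 0 b c = ⊥ := by simp [rpow, h]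
      rw [h0, LMonoid.mul_bot]
      exact bot_le
  | succ k ih =>
    intro a b c
    show rpow R j a b * Finset.univ.sup (fun d => rpow R k b d * R d c) ≤ _
    rw [lmul_finsup]
    refine Finset.sup_le fun d _ => ?_
    rw [← mul_assoc]
    have h1 : rpow R j a b * rpow R k b d * R d c ≤ rpow R (j + k) a d * R d c :=
      lmul_mono_right _ (ih a b d)
    refine le_trans h1 ?_
    have : j + (k + 1) = (j + k) + 1 := by omega
    rw [this]
    exact Finset.le_sup (f := fun d => rpow R (j + k) a d * R d c) (Finset.mem_univ d)

end Aux

/-- Let `L` be an integral ℓ-monoid and `R` a fuzzy relation on a finite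
set `A` with `|A| = n`.  Then `⋁_{k=1}^{n} R^k` (pointwise join of the first `n` powers of
`R`) is the least transitive fuzzy relation on `A` containing `R`: it is transitive, it
contains `R`, and it is below every transitive fuzzy relation containing `R`. -/
theorem stmt7 {L A : Type*} [IntegralLMonoid L] [Fintype A] (R : A → A → L) :
    (∀ a b c, powJoin R a b * powJoin R b c ≤ powJoin R a c) ∧
    (∀ a b, R a b ≤ powJoin R a b) ∧
    (∀ T : A → A → L, (∀ a b c, T a b * T b c ≤ T a c) → (∀ a b, R a b ≤ T a b) →
      ∀ a b, powJoin R a b ≤ T a b) := by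
  refine ⟨?_, ?_, ?_⟩
  · intro a b c
    show (Finset.Icc 1 (Fintype.card A)).sup (fun k => rpow R k a b) * powJoin R b c ≤ _
    rw [lfinsup_mul]
    refine Finset.sup_le fun j hj => ?_
    show rpow R j a b * (Finset.Icc 1 (Fintype.card A)).sup (fun k => rpow R k b c) ≤ _
    rw [lmul_finsup]
    refine Finset.sup_le fun k hk => ?_
    rw [Finset.mem_Icc] at hj hk
    exact le_trans (rpow_mul_le R j k a b c) (rpow_le_powJoin R (j + k) (by omega) a c)
  · intro a b
    have h1 : (1 : ℕ) ∈ Finset.Icc 1 (Fintype.card A) := by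
      rw [Finset.mem_Icc]
      have : 0 < Fintype.card A := Fintype.card_pos_iff.mpr ⟨a⟩
      omega
    calc R a b = rpow R 1 a b := (rpow_one_eq R a b).symm
      _ ≤ powJoin R a b := Finset.le_sup (f := fun k => rpow R k a b) h1
  · intro T hT hRT a b
    have key : ∀ m, 1 ≤ m → ∀ a b, rpow R m a b ≤ T a b := by
      intro m
      induction m with
      | zero => intro h; omega
      | succ m ih =>
        intro _ a b
        by_cases hm : m = 0
        · subst hm
          rw [rpow_one_eq R a b]
          exact hRT a b
        · show Finset.univ.sup (fun c => rpow R m a c * R c b) ≤ T a b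
          refine Finset.sup_le fun c _ => ?_
          exact le_trans (lmul_mono (ih (by omega) a c) (hRT c b)) (hT a c b)
    refine Finset.sup_le fun k hk => ?_
    rw [Finset.mem_Icc] at hk
    exact key k hk.1 a b

end
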